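/- Let G ∈ H^∞_{m×p} with T_G T_G* strictly positive, and let Θ₀ be the associated p×(p−m) matrix. Then Θ₀* (I_p + E_p* H_G* (T_G T_G*)⁻¹ H_G E_p) Θ₀ = I_{p−m}. -/

import Mathlib

/-!
Setting: `l2 n` models ℓ²₊(ℂⁿ); `lp.single 2 0` is the canonical embedding `E_n`, and
evaluating a sequence at coordinate `k` realizes `E_n* (S_n*)^k`.  Block Toeplitz and
Hankel operators, as well as the (bounded) inverse of `T_G T_G*`, are specified through
their actions on the standard basis vectors of the coordinate spaces.
-/

noncomputable section
open scoped Matrix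

/-- ℂⁿ with the Euclidean norm. -/
abbrev ES (n : ℕ) : Type := EuclideanSpace ℂ (Fin n)

/-- ℓ²₊(ℂⁿ). -/
abbrev l2 (n : ℕ) : Type := lp (fun _ : ℕ => ES n) 2

/-- The `b`-th standard basis vector of ℂⁿ. -/
abbrev eVec (n : ℕ) (b : Fin n) : ES n := EuclideanSpace.single b 1

/-- The matrix function `z ↦ ∑' ν, z ^ ν • F ν` determined by a coefficient sequence. -/
def seriesM {r s : ℕ} (F : ℕ → Matrix (Fin r) (Fin s) ℂ) (z : ℂ) :
    Matrix (Fin r) (Fin s) ℂ :=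
  Matrix.of fun a b => ∑' ν : ℕ, z ^ ν * F ν a b

/-!
Write `A = E* T* (T T*)⁻¹ T E`, `B = E* H* (T T*)⁻¹ H E`, `U = E* T* (T T*)⁻¹`, `G₀ = G(0)`.
The shift relations `T S = S T` and `T* S = S T* + E E* H*`, together with
`S H E = T E - E G₀`, give `T T* S x = T E - E G₀ + T E B` for `x = (T T*)⁻¹ H E`;
applying `E* T* (T T*)⁻¹` yields `B = A - U G₀ + A B`, i.e. `(I - A)(I + B) = I - U G₀`.
Since `T* E = E G₀*` we get `A G₀* = G₀*`, so `(G₀ Θ₀)(G₀ Θ₀)* = G₀ (I - A) G₀* = 0`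
and `G₀ Θ₀ = 0`. Hence `Θ₀ Θ₀* (I + B) Θ₀ = (I - U G₀) Θ₀ = Θ₀`, and `Θ₀` can be
cancelled because it is injective.
-/

open scoped InnerProductSpace

section MatrixAlgebra

lemma Matrix.eq_zero_of_mul_eq_zero_of_mulVec {R : Type*} [NonUnitalNonAssocSemiring R]
    {n k l : Type*} [Fintype k] {Θ : Matrix n k R} {D : Matrix k l R}
    (hker : ∀ w, Θ *ᵥ w = 0 → w = 0) (h : Θ * D = 0) : D = 0 :=
  Matrix.ext_col fun j => hker _ congr(($h).col j)

variable {R : Type*} [Ring R] [StarRing R] [PartialOrder R] [StarOrderedRing R] [NoZeroDivisors R]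
  {n k l : Type*} [Fintype n] [Fintype k] [DecidableEq n]

lemma Matrix.mul_eq_zero_of_mul_conjTranspose_eq_one_sub {Θ : Matrix n k R} {A : Matrix n n R}
    {F : Matrix l n R} (hΘ : Θ * Θᴴ = 1 - A) (hAF : A * Fᴴ = Fᴴ) : F * Θ = 0 := by
  rw [← Matrix.self_mul_conjTranspose_eq_zero, Matrix.conjTranspose_mul, Matrix.mul_assoc,
    ← Matrix.mul_assoc Θ, hΘ, Matrix.sub_mul, Matrix.one_mul, hAF, sub_self, Matrix.mul_zero]

lemma Matrix.conjTranspose_mul_one_add_mul_eq_one [Fintype l] [DecidableEq k]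
    {Θ : Matrix n k R} {A B : Matrix n n R} {U : Matrix n l R} {F : Matrix l n R}
    (hker : ∀ w, Θ *ᵥ w = 0 → w = 0) (hΘ : Θ * Θᴴ = 1 - A) (hAF : A * Fᴴ = Fᴴ)
    (hB : B = A - U * F + A * B) : Θᴴ * (1 + B) * Θ = 1 := by
  have hFΘ : F * Θ = 0 := Matrix.mul_eq_zero_of_mul_conjTranspose_eq_one_sub hΘ hAF
  have hfactor : (1 - A) * (1 + B) = 1 - U * F := by
    have hBA : B - A * B = A - U * F := sub_eq_of_eq_add hB
    calc (1 - A) * (1 + B) = 1 - A + (B - A * B) := by noncomm_ring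
      _ = 1 - U * F := by rw [hBA]; abel
  refine sub_eq_zero.mp (Matrix.eq_zero_of_mul_eq_zero_of_mulVec hker ?_)
  calc Θ * (Θᴴ * (1 + B) * Θ - 1) = (Θ * Θᴴ) * (1 + B) * Θ - Θ := by
        simp only [Matrix.mul_sub, Matrix.mul_assoc, Matrix.mul_one]
    _ = 0 := by
      rw [hΘ, hfactor, Matrix.sub_mul, Matrix.one_mul, Matrix.mul_assoc, hFΘ, Matrix.mul_zero,
        sub_zero, sub_self]

end MatrixAlgebra

section Shift

variable {E : Type*} [NormedAddCommGroup E]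

/-- The forward shift `S` on `ℓ²(ℕ, E)`. -/
def lpShift (x : lp (fun _ : ℕ => E) 2) : lp (fun _ : ℕ => E) 2 :=
  ⟨fun i => Nat.casesOn i 0 fun k => x k, by
    apply memℓp_gen
    exact (summable_nat_add_iff 1).mp ((lp.memℓp x).summable (by norm_num))⟩

@[simp] lemma lpShift_apply_zero (x : lp (fun _ : ℕ => E) 2) : lpShift x 0 = 0 := rfl

@[simp] lemma lpShift_apply_succ (x : lp (fun _ : ℕ => E) 2) (k : ℕ) :
    lpShift x (k + 1) = x k := rfl

lemma lpShift_single (k : ℕ) (v : E) :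
    lpShift (lp.single 2 k v) = lp.single 2 (k + 1) v := by
  refine lp.ext (funext fun i => ?_)
  rcases i with _ | i
  · simp
  · simp [Pi.single_apply]

variable {𝕜 : Type*} [RCLike 𝕜] [InnerProductSpace 𝕜 E]

lemma inner_lpShift_right_of_apply_succ {u v : lp (fun _ : ℕ => E) 2} (h : ∀ k, u (k + 1) = v k)
    (w : lp (fun _ : ℕ => E) 2) : ⟪u, lpShift w⟫_𝕜 = ⟪v, w⟫_𝕜 := by
  rw [lp.inner_eq_tsum, (lp.summable_inner (𝕜 := 𝕜) u (lpShift w)).tsum_eq_zero_add,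
    lp.inner_eq_tsum, lpShift_apply_zero, inner_zero_right, zero_add]
  simp only [lpShift_apply_succ, h]

lemma inner_single_zero_lpShift (v : E) (y : lp (fun _ : ℕ => E) 2) :
    ⟪lp.single 2 0 v, lpShift y⟫_𝕜 = 0 := by
  simp [lp.inner_single_left]

end Shift

section Coordinates

variable {n r s : ℕ}

lemma l2_ext {x y : l2 n} (h : ∀ i a, x i a = y i a) : x = y :=
  lp.ext (funext fun i => PiLp.ext (h i))

lemma inner_single_eVec (i : ℕ) (a : Fin n) (y : l2 n) :
    ⟪lp.single 2 i (eVec n a), y⟫_ℂ = y i a := by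
  simp [lp.inner_single_left, EuclideanSpace.inner_single_left]

lemma apply_eq_inner_adjoint_single (X : l2 s →L[ℂ] l2 r) (z : l2 s) (i : ℕ) (a : Fin r) :
    X z i a = ⟪X.adjoint (lp.single 2 i (eVec r a)), z⟫_ℂ := by
  rw [ContinuousLinearMap.adjoint_inner_left, inner_single_eVec]

lemma adjoint_apply_eq_inner_single (X : l2 s →L[ℂ] l2 r) (y : l2 r) (j : ℕ) (b : Fin s) :
    X.adjoint y j b = ⟪X (lp.single 2 j (eVec s b)), y⟫_ℂ := by
  rw [← inner_single_eVec, ContinuousLinearMap.adjoint_inner_right]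

lemma single_eq_sum_smul_single_eVec (i : ℕ) (v : ES n) :
    lp.single 2 i v = ∑ b, v b • (lp.single 2 i (eVec n b) : l2 n) := by
  conv_lhs => rw [← (EuclideanSpace.basisFun (Fin n) ℂ).toBasis.sum_repr v]
  simp only [OrthonormalBasis.coe_toBasis_repr_apply, EuclideanSpace.basisFun_repr,
    OrthonormalBasis.coe_toBasis, EuclideanSpace.basisFun_apply]
  exact map_sum (lp.lsingle (𝕜 := ℂ) 2 i) _ _ |>.trans (by simp)

/-- The compression `E_r* X E_s` of `X` to the zeroth coordinates, as a matrix. -/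
def cornerMatrix (X : l2 s →L[ℂ] l2 r) : Matrix (Fin r) (Fin s) ℂ :=
  Matrix.of fun a b => X (lp.single 2 0 (eVec s b)) 0 a

lemma cornerMatrix_mul_apply {t : ℕ} (X : l2 s →L[ℂ] l2 r) (N : Matrix (Fin s) (Fin t) ℂ)
    (a : Fin r) (c : Fin t) :
    (cornerMatrix X * N) a c = X (lp.single 2 0 (WithLp.toLp 2 fun b => N b c)) 0 a := by
  rw [single_eq_sum_smul_single_eVec, map_sum]
  simp only [Matrix.mul_apply, cornerMatrix, map_smul, lp.coeFn_sum, lp.coeFn_smul]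
  rw [Finset.sum_apply, WithLp.ofLp_sum, Finset.sum_apply]
  simp [mul_comm]

end Coordinates

section BlockToeplitz

variable {m p : ℕ} {G : ℕ → Matrix (Fin m) (Fin p) ℂ}

def IsBlockToeplitz (G : ℕ → Matrix (Fin m) (Fin p) ℂ) (T : l2 p →L[ℂ] l2 m) : Prop :=
  ∀ (j : ℕ) (b : Fin p) (i : ℕ) (a : Fin m),
    T (lp.single 2 j (eVec p b)) i a = if j ≤ i then G (i - j) a b else 0

def IsBlockHankel (G : ℕ → Matrix (Fin m) (Fin p) ℂ) (H : l2 p →L[ℂ] l2 m) : Prop :=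
  ∀ (j : ℕ) (b : Fin p) (i : ℕ) (a : Fin m),
    H (lp.single 2 j (eVec p b)) i a = G (i + j + 1) a b

variable {T H : l2 p →L[ℂ] l2 m}

namespace IsBlockToeplitz

lemma adjoint_single_zero (hT : IsBlockToeplitz G T) (k : Fin m) :
    T.adjoint (lp.single 2 0 (eVec m k))
      = lp.single 2 0 (WithLp.toLp 2 fun b => (G 0)ᴴ b k : ES p) := by
  refine l2_ext fun j b => ?_
  rw [adjoint_apply_eq_inner_single, ← inner_conj_symm, inner_single_eVec, hT]
  rcases j with _ | j <;> simp

lemma adjoint_lpShift_apply_succ (hT : IsBlockToeplitz G T) (y : l2 m) (k : ℕ) :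
    T.adjoint (lpShift y) (k + 1) = T.adjoint y k := by
  refine PiLp.ext fun b => ?_
  rw [adjoint_apply_eq_inner_single, adjoint_apply_eq_inner_single]
  refine inner_lpShift_right_of_apply_succ (fun i => PiLp.ext fun a => ?_) y
  rw [hT, hT]
  simp only [add_le_add_iff_right, Nat.add_sub_add_right]

lemma adjoint_lpShift (hT : IsBlockToeplitz G T) (hH : IsBlockHankel G H) (y : l2 m) :
    T.adjoint (lpShift y) = lpShift (T.adjoint y) + lp.single 2 0 (H.adjoint y 0) := by
  refine lp.ext (funext fun i => ?_)
  rcases i with _ | k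
  · refine PiLp.ext fun b => ?_
    simp only [lp.coeFn_add, Pi.add_apply, lpShift_apply_zero, zero_add, lp.single_apply_self]
    rw [adjoint_apply_eq_inner_single, adjoint_apply_eq_inner_single]
    refine inner_lpShift_right_of_apply_succ (fun i => PiLp.ext fun a => ?_) y
    rw [hT, hH]
    simp
  · simp [hT.adjoint_lpShift_apply_succ]

lemma map_lpShift (hT : IsBlockToeplitz G T) (w : l2 p) : T (lpShift w) = lpShift (T w) := by
  refine l2_ext fun i a => ?_
  rw [apply_eq_inner_adjoint_single]
  rcases i with _ | k
  · rw [hT.adjoint_single_zero, inner_single_zero_lpShift, lpShift_apply_zero]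
    rfl
  · rw [← lpShift_single, inner_lpShift_right_of_apply_succ (hT.adjoint_lpShift_apply_succ _) w,
      ← apply_eq_inner_adjoint_single, lpShift_apply_succ]

lemma lpShift_hankel_single_zero (hT : IsBlockToeplitz G T) (hH : IsBlockHankel G H)
    (b : Fin p) :
    lpShift (H (lp.single 2 0 (eVec p b)))
      = T (lp.single 2 0 (eVec p b)) - lp.single 2 0 (WithLp.toLp 2 fun a => G 0 a b : ES m) := by
  refine l2_ext fun i a => ?_
  rcases i with _ | k
  · simp [hT 0 b 0 a]
  · simp [hT 0 b (k + 1) a, hH 0 b k a]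

variable {Tinv : l2 m →L[ℂ] l2 m}

lemma cornerMatrix_mul_conjTranspose (hT : IsBlockToeplitz G T)
    (hT1 : ∀ x, Tinv (T (T.adjoint x)) = x) :
    cornerMatrix (T.adjoint ∘L Tinv ∘L T) * (G 0)ᴴ = (G 0)ᴴ := by
  ext a k
  rw [cornerMatrix_mul_apply, ← hT.adjoint_single_zero, ContinuousLinearMap.comp_apply,
    ContinuousLinearMap.comp_apply, hT1, hT.adjoint_single_zero]
  simp

lemma cornerMatrix_hankel_eq (hT : IsBlockToeplitz G T) (hH : IsBlockHankel G H)
    (hT1 : ∀ x, Tinv (T (T.adjoint x)) = x) (hT2 : ∀ x, T (T.adjoint (Tinv x)) = x) :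
    cornerMatrix (H.adjoint ∘L Tinv ∘L H)
      = cornerMatrix (T.adjoint ∘L Tinv ∘L T) - cornerMatrix (T.adjoint ∘L Tinv) * G 0
        + cornerMatrix (T.adjoint ∘L Tinv ∘L T) * cornerMatrix (H.adjoint ∘L Tinv ∘L H) := by
  ext a b
  set x := Tinv (H (lp.single 2 0 (eVec p b)))
  have hTTS : T (T.adjoint (lpShift x)) = T (lp.single 2 0 (eVec p b))
      - lp.single 2 0 (WithLp.toLp 2 fun a => G 0 a b : ES m)
      + T (lp.single 2 0 (H.adjoint x 0)) := by
    rw [hT.adjoint_lpShift hH, map_add, hT.map_lpShift, hT2, hT.lpShift_hankel_single_zero hH]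
  have hcorner : H.adjoint x 0 = T.adjoint (lpShift x) 0 := by
    simp [hT.adjoint_lpShift hH]
  calc cornerMatrix (H.adjoint ∘L Tinv ∘L H) a b
      = T.adjoint (Tinv (T (T.adjoint (lpShift x)))) 0 a := by
        rw [hT1, ← hcorner]
        rfl
    _ = _ := by
      rw [hTTS, Matrix.add_apply, Matrix.sub_apply, cornerMatrix_mul_apply,
        cornerMatrix_mul_apply]
      simp only [map_add, map_sub, ContinuousLinearMap.comp_apply]
      rfl

end IsBlockToeplitz

end BlockToeplitz

theorem bezout_corona_stmt8_general
    (m p : ℕ)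
    (G : ℕ → Matrix (Fin m) (Fin p) ℂ)
    (TG : l2 p →L[ℂ] l2 m)
    (hTG : ∀ (j : ℕ) (b : Fin p) (i : ℕ) (a : Fin m),
      (TG (lp.single 2 j (eVec p b))) i a = if j ≤ i then G (i - j) a b else 0)
    (HG : l2 p →L[ℂ] l2 m)
    (hHG : ∀ (j : ℕ) (b : Fin p) (i : ℕ) (a : Fin m),
      (HG (lp.single 2 j (eVec p b))) i a = G (i + j + 1) a b)
    (Tinv : l2 m →L[ℂ] l2 m)
    (hT1 : ∀ x, Tinv (TG (TG.adjoint x)) = x)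
    (hT2 : ∀ x, TG (TG.adjoint (Tinv x)) = x)
    (Θ₀ : Matrix (Fin p) (Fin (p - m)) ℂ)
    (hΘ₀ker : ∀ w : Fin (p - m) → ℂ, Θ₀.mulVec w = 0 → w = 0)
    (hΘ₀ : ∀ (a b : Fin p), (Θ₀ * Θ₀ᴴ) a b
      = (if a = b then 1 else 0) - (TG.adjoint (Tinv (TG (lp.single 2 0 (eVec p b))))) 0 a) :
    Θ₀ᴴ * (1 + Matrix.of fun a b : Fin p =>
        (HG.adjoint (Tinv (HG (lp.single 2 0 (eVec p b))))) 0 a) * Θ₀ = 1 := by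
  have hΘ : Θ₀ * Θ₀ᴴ = 1 - cornerMatrix (TG.adjoint ∘L Tinv ∘L TG) := by
    ext a b
    rw [hΘ₀, Matrix.sub_apply, Matrix.one_apply]
    rfl
  open scoped ComplexOrder in
  exact Matrix.conjTranspose_mul_one_add_mul_eq_one hΘ₀ker hΘ
    (IsBlockToeplitz.cornerMatrix_mul_conjTranspose hTG hT1)
    (IsBlockToeplitz.cornerMatrix_hankel_eq hTG hHG hT1 hT2)

/-- `Θ₀* (I_p + E_p* H_G* (T_G T_G*)⁻¹ H_G E_p) Θ₀ = I_{p−m}`. -/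
theorem bezout_corona_stmt8
    (m p : ℕ) (hm : 0 < m) (hmp : m ≤ p)
    (G : ℕ → Matrix (Fin m) (Fin p) ℂ)
    (TG : l2 p →L[ℂ] l2 m)
    (hTG : ∀ (j : ℕ) (b : Fin p) (i : ℕ) (a : Fin m),
      (TG (lp.single 2 j (eVec p b))) i a = if j ≤ i then G (i - j) a b else 0)
    (HG : l2 p →L[ℂ] l2 m)
    (hHG : ∀ (j : ℕ) (b : Fin p) (i : ℕ) (a : Fin m),
      (HG (lp.single 2 j (eVec p b))) i a = G (i + j + 1) a b)
    (Tinv : l2 m →L[ℂ] l2 m)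
    (hT1 : ∀ x, Tinv (TG (TG.adjoint x)) = x)
    (hT2 : ∀ x, TG (TG.adjoint (Tinv x)) = x)
    (Θ₀ : Matrix (Fin p) (Fin (p - m)) ℂ)
    (hΘ₀ker : ∀ w : Fin (p - m) → ℂ, Θ₀.mulVec w = 0 → w = 0)
    (hΘ₀ : ∀ (a b : Fin p), (Θ₀ * Θ₀ᴴ) a b
      = (if a = b then 1 else 0) - (TG.adjoint (Tinv (TG (lp.single 2 0 (eVec p b))))) 0 a) :
    Θ₀ᴴ * (1 + Matrix.of fun a b : Fin p =>
        (HG.adjoint (Tinv (HG (lp.single 2 0 (eVec p b))))) 0 a) * Θ₀ = 1 :=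
  bezout_corona_stmt8_general m p G TG hTG HG hHG Tinv hT1 hT2 Θ₀ hΘ₀ker hΘ₀
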